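/- Let U be the union of those connected components of A ∪ B (in the Dynkin graph on Π) that do not meet A, and set B′ = B \ U. Then the (A,B)-roots coincide with the (A,B′)-roots, a root is a significant (A,B)-root if and only if it is a significant (A,B′)-root, and consequently ℓ(A,B) = ℓ(A,B′). -/

import Mathlib

open scoped RealInnerProductSpace
open scoped Classical

/-- A reduced crystallographic root system `roots` spanning a real inner product
space `V`, with a chosen set `pos` of positive roots, the corresponding base
`simple` of simple roots, and the coefficient function `coeff`, where
`coeff ξ α = c_α(ξ)` is the coefficient of the simple root `α` in the unique
expression `ξ = ∑_{α ∈ simple} c_α(ξ) • α`. -/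
structure RootSystemData (V : Type*) [NormedAddCommGroup V] [InnerProductSpace ℝ V] where
  roots : Finset V
  pos : Finset V
  simple : Finset V
  coeff : V → V → ℝ
  pos_subset : pos ⊆ roots
  simple_subset : simple ⊆ pos
  root_ne_zero : ∀ δ ∈ roots, δ ≠ (0 : V)
  neg_mem : ∀ δ ∈ roots, -δ ∈ roots
  pos_or_neg : ∀ δ ∈ roots, δ ∈ pos ∨ -δ ∈ pos
  pos_neg_not : ∀ δ ∈ pos, -δ ∉ pos
  reduced : ∀ δ ∈ roots, ∀ t : ℝ, t • δ ∈ roots → t = 1 ∨ t = -1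
  crystallographic : ∀ δ ∈ roots, ∀ ε ∈ roots, ∃ n : ℤ, 2 * ⟪δ, ε⟫ / ⟪ε, ε⟫ = (n : ℝ)
  reflect_mem : ∀ δ ∈ roots, ∀ ε ∈ roots, δ - (2 * ⟪δ, ε⟫ / ⟪ε, ε⟫) • ε ∈ roots
  span_eq_top : Submodule.span ℝ (simple : Set V) = ⊤
  linearIndependent : LinearIndependent ℝ (fun α : simple => (α : V))
  coeff_spec : ∀ ξ : V, ξ = ∑ α ∈ simple, coeff ξ α • α
  pos_coeff_nonneg : ∀ δ ∈ pos, ∀ α ∈ simple, 0 ≤ coeff δ α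

namespace RootSystemData

variable {V : Type*} [NormedAddCommGroup V] [InnerProductSpace ℝ V]

/-- The support `C(ξ)` of `ξ`: the set of simple roots with nonzero coefficient in `ξ`. -/
noncomputable def support (R : RootSystemData V) (ξ : V) : Finset V :=
  R.simple.filter fun α => R.coeff ξ α ≠ 0

/-- The coefficientwise partial order: `x ≤ y` iff `c_α(x) ≤ c_α(y)` for all simple `α`. -/
def cle (R : RootSystemData V) (x y : V) : Prop :=
  ∀ α ∈ R.simple, R.coeff x α ≤ R.coeff y α

/-- An `(A,B)`-root: a positive root whose support lies in `A ∪ B` and which has a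
strictly positive coefficient at some element of `A`. -/
def IsABRoot (R : RootSystemData V) (A B : Finset V) (δ : V) : Prop :=
  δ ∈ R.pos ∧ R.support δ ⊆ A ∪ B ∧ ∃ α₀ ∈ A, 0 < R.coeff δ α₀

/-- A significant `(A,B)`-root. -/
def IsSignificant (R : RootSystemData V) (A B : Finset V) (δ : V) : Prop :=
  R.IsABRoot A B δ ∧ ∃ σ : V, R.IsABRoot A B σ ∧ R.cle σ δ ∧
    (∑ β ∈ B, R.coeff σ β * ⟪β, β⟫) ≤ (∑ α ∈ A, R.coeff σ α * ⟪α, α⟫) ∧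
    (∀ x ∈ R.support (δ - σ), ∀ y ∈ R.support (δ - σ), ‖x‖ = ‖y‖) ∧
    (∀ x ∈ R.support (δ - σ), ‖x‖ ≤ ‖σ‖)

/-- `ℓ(A,B)`, the number of significant `(A,B)`-roots. -/
noncomputable def ell (R : RootSystemData V) (A B : Finset V) : ℕ :=
  (R.pos.filter fun δ => R.IsSignificant A B δ).card

/-- `γ`, the half-sum of the positive roots. -/
noncomputable def gamma (R : RootSystemData V) : V :=
  (2 : ℝ)⁻¹ • ∑ δ ∈ R.pos, δ

/-- A weight: `2(β,α)/(α,α) ∈ ℤ` for all roots `α`. -/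
def IsWeight (R : RootSystemData V) (β : V) : Prop :=
  ∀ δ ∈ R.roots, ∃ n : ℤ, 2 * ⟪β, δ⟫ / ⟪δ, δ⟫ = (n : ℝ)

/-- A regular weight: not orthogonal to any positive root. -/
def IsRegular (R : RootSystemData V) (lam : V) : Prop :=
  ∀ δ ∈ R.pos, ⟪lam, δ⟫ ≠ 0

end RootSystemData


/-- `x` and `y` are connected within `S ⊆ Π` in the Dynkin graph (edges between simple
roots with nonzero inner product). -/
def RootSystemData.connTo {V : Type*} [NormedAddCommGroup V] [InnerProductSpace ℝ V]
    (R : RootSystemData V) (S : Finset V) (x y : V) : Prop :=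
  ∃ (k : ℕ) (p : ℕ → V), p 0 = x ∧ p k = y ∧ (∀ i ≤ k, p i ∈ S) ∧
    ∀ i < k, ⟪p i, p (i + 1)⟫ ≠ 0


/-
Let `U` be the union of the components of `A ∪ B` avoiding `A`. The simple roots in `U` are
orthogonal to the rest of `A ∪ B`, and the support of a positive root never splits into two
nonempty mutually orthogonal pieces: for a root `τ` whose support meets both `S₁` and `S₂ ⊥ S₁`,
some `α ∈ S₁` has `(τ, α) > 0`, and the reflection `s_α τ` is again such a root, with a smaller
`S₁`-height (it cannot leave `S₁` entirely, since `(s_α τ, α) = -(τ, α) < 0`). Hence every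
`(A,B)`-root, which has an `A`-coefficient outside `U`, has support disjoint from `U`; so `U`
contributes nothing to any of the data defining (significant) `(A,B)`-roots.
-/

open Finset

lemma inner_reflect_self {V : Type*} [NormedAddCommGroup V] [InnerProductSpace ℝ V] {τ α : V}
    (hα : α ≠ 0) : ⟪τ - (2 * ⟪τ, α⟫ / ⟪α, α⟫) • α, α⟫ = -⟪τ, α⟫ := by
  have := real_inner_self_pos.mpr hα
  rw [inner_sub_left, real_inner_smul_left]
  field_simp
  ring

namespace RootSystemData

variable {V : Type*} [NormedAddCommGroup V] [InnerProductSpace ℝ V] (R : RootSystemData V)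

lemma ne_zero_of_mem_simple {α : V} (hα : α ∈ R.simple) : α ≠ 0 :=
  R.root_ne_zero α (R.pos_subset (R.simple_subset hα))

lemma eq_zero_of_sum_smul_eq_zero {S : Finset V} (hS : S ⊆ R.simple) {c : V → ℝ}
    (h : ∑ α ∈ S, c α • α = 0) : ∀ α ∈ S, c α = 0 :=
  linearIndepOn_iff'.mp (show LinearIndepOn ℝ id (R.simple : Set V) from R.linearIndependent)
    S c (by exact_mod_cast hS) h

lemma coeff_eq_of_eq_sum {ξ : V} {c : V → ℝ} (h : ξ = ∑ α ∈ R.simple, c α • α) :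
    ∀ α ∈ R.simple, R.coeff ξ α = c α := by
  have hdiff : ∑ α ∈ R.simple, (R.coeff ξ α - c α) • α = 0 := by
    rw [← sub_eq_zero.mpr h]
    simp only [sub_smul, sum_sub_distrib, ← R.coeff_spec ξ]
  exact fun α hα => sub_eq_zero.mp (R.eq_zero_of_sum_smul_eq_zero subset_rfl hdiff α hα)

lemma coeff_neg (ξ : V) {α : V} (hα : α ∈ R.simple) : R.coeff (-ξ) α = -R.coeff ξ α := by
  refine R.coeff_eq_of_eq_sum (c := fun β => -R.coeff ξ β) ?_ α hα
  conv_lhs => rw [R.coeff_spec ξ]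
  simp only [neg_smul, sum_neg_distrib]

lemma coeff_sub_smul (τ : V) {α : V} (hα : α ∈ R.simple) (k : ℝ) :
    ∀ β ∈ R.simple, R.coeff (τ - k • α) β = R.coeff τ β - if β = α then k else 0 := by
  apply R.coeff_eq_of_eq_sum
  simp only [sub_smul, ite_smul, zero_smul, sum_sub_distrib]
  rw [← R.coeff_spec τ, sum_ite_eq' R.simple α (fun x => k • x), if_pos hα]

lemma mem_support {ξ α : V} : α ∈ R.support ξ ↔ α ∈ R.simple ∧ R.coeff ξ α ≠ 0 :=
  mem_filter

lemma coeff_eq_zero_of_notMem_support {ξ α : V} (hα : α ∈ R.simple) (h : α ∉ R.support ξ) :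
    R.coeff ξ α = 0 :=
  not_not.mp fun hc => h (R.mem_support.mpr ⟨hα, hc⟩)

lemma support_sub_smul_subset (τ : V) {α : V} (hα : α ∈ R.simple) (k : ℝ) :
    R.support (τ - k • α) ⊆ insert α (R.support τ) := by
  intro β hβ
  obtain ⟨hβs, hβc⟩ := R.mem_support.mp hβ
  rw [R.coeff_sub_smul τ hα k β hβs] at hβc
  by_cases hβα : β = α
  · exact hβα ▸ mem_insert_self β _
  · rw [if_neg hβα, sub_zero] at hβc
    exact mem_insert_of_mem (R.mem_support.mpr ⟨hβs, hβc⟩)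

lemma mem_pos_of_coeff_pos {δ : V} (hδ : δ ∈ R.roots) {α : V} (hα : α ∈ R.simple)
    (h : 0 < R.coeff δ α) : δ ∈ R.pos := by
  refine (R.pos_or_neg δ hδ).resolve_right fun hneg => ?_
  have := R.pos_coeff_nonneg _ hneg α hα
  rw [R.coeff_neg δ hα] at this
  linarith

lemma sum_coeff_smul_of_support_subset {S : Finset V} (hS : S ⊆ R.simple) {ξ : V}
    (h : R.support ξ ⊆ S) : ∑ α ∈ S, R.coeff ξ α • α = ξ := by
  conv_rhs => rw [R.coeff_spec ξ]
  refine sum_subset hS fun α hα hαS => ?_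
  rw [R.coeff_eq_zero_of_notMem_support hα fun h' => hαS (h h'), zero_smul]

lemma inner_eq_zero_of_support_subset {S : Finset V} (hS : S ⊆ R.simple) {ξ x : V}
    (h : R.support ξ ⊆ S) (hx : ∀ y ∈ S, ⟪y, x⟫ = 0) : ⟪ξ, x⟫ = 0 := by
  rw [← R.sum_coeff_smul_of_support_subset hS h, sum_inner]
  exact sum_eq_zero fun y hy => by rw [real_inner_smul_left, hx y hy, mul_zero]

def Straddles (S₁ S₂ : Finset V) (τ : V) : Prop :=
  τ ∈ R.pos ∧ R.support τ ⊆ S₁ ∪ S₂ ∧ (R.support τ ∩ S₁).Nonempty ∧ (R.support τ ∩ S₂).Nonempty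

section Orthogonal

variable {S₁ S₂ : Finset V} (hS₁ : S₁ ⊆ R.simple) (hS₂ : S₂ ⊆ R.simple)
  (horth : ∀ x ∈ S₁, ∀ y ∈ S₂, ⟪x, y⟫ = 0)
include hS₁ hS₂ horth

lemma exists_inner_pos_of_support_subset {τ : V} (hτ : τ ∈ R.pos)
    (hsub : R.support τ ⊆ S₁ ∪ S₂) (hmeet : (R.support τ ∩ S₁).Nonempty) :
    ∃ α ∈ S₁, 0 < ⟪τ, α⟫ := by
  obtain ⟨a, ha⟩ := hmeet
  rw [mem_inter, R.mem_support] at ha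
  have hdisj : Disjoint S₁ S₂ := disjoint_left.mpr fun x h₁ h₂ =>
    R.ne_zero_of_mem_simple (hS₁ h₁) (inner_self_eq_zero.mp (horth x h₁ x h₂))
  set τ₁ := ∑ α ∈ S₁, R.coeff τ α • α
  set τ₂ := ∑ α ∈ S₂, R.coeff τ α • α
  have hτ_eq : τ = τ₁ + τ₂ := by
    rw [← sum_union hdisj, R.sum_coeff_smul_of_support_subset (union_subset hS₁ hS₂) hsub]
  have h₁₂ : ⟪τ₁, τ₂⟫ = 0 := by
    simp only [τ₁, τ₂, sum_inner, inner_sum, real_inner_smul_left, real_inner_smul_right]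
    exact sum_eq_zero fun x hx => sum_eq_zero fun y hy => by rw [horth y hy x hx]; ring
  have hτ₁ : τ₁ ≠ 0 := fun h0 => ha.1.2 (R.eq_zero_of_sum_smul_eq_zero hS₁ h0 a ha.2)
  have hpos : 0 < ⟪τ₁, τ⟫ := by
    rw [hτ_eq, inner_add_right, h₁₂, add_zero]
    exact real_inner_self_pos.mpr hτ₁
  by_contra! hneg
  have hnonpos : ⟪τ₁, τ⟫ ≤ 0 := by
    rw [sum_inner]
    refine sum_nonpos fun α hα => ?_
    rw [real_inner_smul_left, real_inner_comm]
    exact mul_nonpos_of_nonneg_of_nonpos (R.pos_coeff_nonneg τ hτ α (hS₁ hα)) (hneg α hα)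
  linarith

lemma Straddles.exists_sum_coeff_lt {τ : V} (h : R.Straddles S₁ S₂ τ) :
    ∃ τ', R.Straddles S₁ S₂ τ' ∧ ∑ α ∈ S₁, R.coeff τ' α < ∑ α ∈ S₁, R.coeff τ α := by
  obtain ⟨hτ, hsub, h₁, b, hb⟩ := h
  rw [mem_inter] at hb
  obtain ⟨α, hαS₁, hτα⟩ := R.exists_inner_pos_of_support_subset hS₁ hS₂ horth hτ hsub h₁
  have hα := hS₁ hαS₁
  have hα₀ := R.ne_zero_of_mem_simple hα
  have hk : 0 < 2 * ⟪τ, α⟫ / ⟪α, α⟫ := by have := real_inner_self_pos.mpr hα₀; positivity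
  set k := 2 * ⟪τ, α⟫ / ⟪α, α⟫
  have hcoeff := R.coeff_sub_smul τ hα k
  have hbα : b ≠ α := by
    rintro rfl
    exact hα₀ (inner_self_eq_zero.mp (horth b hαS₁ b hb.2))
  have hbs := hS₂ hb.2
  have hb' : 0 < R.coeff (τ - k • α) b := by
    rw [hcoeff b hbs, if_neg hbα, sub_zero]
    exact (R.pos_coeff_nonneg τ hτ b hbs).lt_of_ne' (R.mem_support.mp hb.1).2
  have hsub' : R.support (τ - k • α) ⊆ S₁ ∪ S₂ :=
    (R.support_sub_smul_subset τ hα k).trans (insert_subset (mem_union_left _ hαS₁) hsub)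
  refine ⟨τ - k • α, ⟨?_, hsub', ?_, b, mem_inter.mpr ⟨R.mem_support.mpr ⟨hbs, hb'.ne'⟩, hb.2⟩⟩, ?_⟩
  · exact R.mem_pos_of_coeff_pos (R.reflect_mem τ (R.pos_subset hτ) α
      (R.pos_subset (R.simple_subset hα))) hbs hb'
  · by_contra hS₁'
    have hsub₂ : R.support (τ - k • α) ⊆ S₂ := fun x hx =>
      (mem_union.mp (hsub' hx)).resolve_left fun hx₁ => hS₁' ⟨x, mem_inter.mpr ⟨hx, hx₁⟩⟩
    have := R.inner_eq_zero_of_support_subset hS₂ hsub₂ fun y hy => by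
      rw [real_inner_comm]; exact horth α hαS₁ y hy
    rw [inner_reflect_self hα₀] at this
    linarith
  · rw [sum_congr rfl fun β hβ => hcoeff β (hS₁ hβ), sum_sub_distrib,
      sum_ite_eq' S₁ α (fun _ => k), if_pos hαS₁]
    linarith

lemma not_straddles (τ : V) : ¬ R.Straddles S₁ S₂ τ := by
  intro h
  obtain ⟨τ₀, hτ₀, hmin⟩ := (R.pos.filter (R.Straddles S₁ S₂)).exists_min_image
    (fun τ => ∑ α ∈ S₁, R.coeff τ α) ⟨τ, mem_filter.mpr ⟨h.1, h⟩⟩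
  obtain ⟨τ', h', hlt⟩ := (mem_filter.mp hτ₀).2.exists_sum_coeff_lt R hS₁ hS₂ horth
  exact (hmin τ' (mem_filter.mpr ⟨h'.1, h'⟩)).not_gt hlt

lemma disjoint_support_of_support_subset {τ : V} (hτ : τ ∈ R.pos)
    (hsub : R.support τ ⊆ S₁ ∪ S₂) (hmeet : (R.support τ ∩ S₂).Nonempty) :
    Disjoint (R.support τ) S₁ := by
  rw [disjoint_iff_inter_eq_empty, ← not_nonempty_iff_eq_empty]
  exact fun h₁ => R.not_straddles hS₁ hS₂ horth τ ⟨hτ, hsub, h₁, hmeet⟩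

end Orthogonal

lemma connTo_refl {S : Finset V} {x : V} (hx : x ∈ S) : R.connTo S x x :=
  ⟨0, fun _ => x, rfl, rfl, fun _ _ => hx, fun _ h => absurd h (Nat.not_lt_zero _)⟩

lemma connTo_of_inner_ne_zero {S : Finset V} {x y a : V} (hx : x ∈ S) (hxy : ⟪x, y⟫ ≠ 0)
    (h : R.connTo S y a) : R.connTo S x a := by
  obtain ⟨k, p, h0, hk, hmem, hadj⟩ := h
  refine ⟨k + 1, fun i => match i with | 0 => x | j + 1 => p j, rfl, hk, ?_, ?_⟩
  · intro i hi
    match i with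
    | 0 => exact hx
    | j + 1 => exact hmem j (by omega)
  · intro i hi
    match i with
    | 0 => simpa [h0] using hxy
    | j + 1 => exact hadj j (by omega)

noncomputable def componentsAvoiding (S A : Finset V) : Finset V :=
  S.filter fun x => ¬ ∃ a ∈ A, R.connTo S x a

lemma disjoint_componentsAvoiding {S A : Finset V} (hA : A ⊆ S) :
    Disjoint A (R.componentsAvoiding S A) :=
  disjoint_left.mpr fun a ha hU => (mem_filter.mp hU).2 ⟨a, ha, R.connTo_refl (hA ha)⟩

lemma inner_eq_zero_of_mem_componentsAvoiding {S A : Finset V} {x y : V}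
    (hx : x ∈ R.componentsAvoiding S A) (hy : y ∈ S \ R.componentsAvoiding S A) : ⟪x, y⟫ = 0 := by
  obtain ⟨hxS, hxA⟩ := mem_filter.mp hx
  obtain ⟨hyS, hyU⟩ := mem_sdiff.mp hy
  by_contra hxy
  obtain ⟨a, ha, hya⟩ : ∃ a ∈ A, R.connTo S y a :=
    not_not.mp fun h => hyU (mem_filter.mpr ⟨hyS, h⟩)
  exact hxA ⟨a, ha, R.connTo_of_inner_ne_zero hxS hxy hya⟩

lemma IsABRoot.disjoint_support_componentsAvoiding {A B : Finset V} (hA : A ⊆ R.simple)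
    (hB : B ⊆ R.simple) {δ : V} (hδ : R.IsABRoot A B δ) :
    Disjoint (R.support δ) (R.componentsAvoiding (A ∪ B) A) := by
  obtain ⟨hpos, hsub, α₀, hα₀, hc⟩ := hδ
  have hUsub : R.componentsAvoiding (A ∪ B) A ⊆ A ∪ B := filter_subset _ _
  have hAB := union_subset hA hB
  refine R.disjoint_support_of_support_subset (hUsub.trans hAB) (sdiff_subset.trans hAB)
    (fun x hx y hy => R.inner_eq_zero_of_mem_componentsAvoiding hx hy) hpos
    (by rwa [union_sdiff_of_subset hUsub]) ⟨α₀, mem_inter.mpr ⟨?_, mem_sdiff.mpr ⟨?_, ?_⟩⟩⟩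
  · exact R.mem_support.mpr ⟨hA hα₀, hc.ne'⟩
  · exact mem_union_left _ hα₀
  · exact disjoint_left.mp (R.disjoint_componentsAvoiding subset_union_left) hα₀

section Prune

variable {A B U : Finset V} (hU : ∀ δ, R.IsABRoot A B δ → Disjoint (R.support δ) U)
include hU

lemma isABRoot_iff_isABRoot_sdiff (δ : V) : R.IsABRoot A B δ ↔ R.IsABRoot A (B \ U) δ := by
  refine ⟨fun hδ => ⟨hδ.1, ?_, hδ.2.2⟩,
    fun hδ => ⟨hδ.1, hδ.2.1.trans (union_subset_union_right sdiff_subset), hδ.2.2⟩⟩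
  calc R.support δ ⊆ (A ∪ B) \ U := subset_sdiff.mpr ⟨hδ.2.1, hU δ hδ⟩
    _ = A \ U ∪ B \ U := union_sdiff_distrib _ _ _
    _ ⊆ A ∪ B \ U := union_subset_union_left sdiff_subset

omit hU in
lemma sum_sdiff_coeff_mul (hB : B ⊆ R.simple) {σ : V} (hσ : Disjoint (R.support σ) U)
    (f : V → ℝ) : ∑ β ∈ B \ U, R.coeff σ β * f β = ∑ β ∈ B, R.coeff σ β * f β :=
  sum_subset sdiff_subset fun β hβ hβ' => by
    have hβU : β ∈ U := not_not.mp fun h => hβ' (mem_sdiff.mpr ⟨hβ, h⟩)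
    rw [R.coeff_eq_zero_of_notMem_support (hB hβ) fun hs => disjoint_left.mp hσ hs hβU, zero_mul]

lemma isSignificant_iff_isSignificant_sdiff (hB : B ⊆ R.simple) (δ : V) :
    R.IsSignificant A B δ ↔ R.IsSignificant A (B \ U) δ := by
  simp only [IsSignificant, ← R.isABRoot_iff_isABRoot_sdiff hU]
  refine and_congr_right' (exists_congr fun σ => and_congr_right fun hσ => ?_)
  rw [R.sum_sdiff_coeff_mul hB (hU σ hσ)]

end Prune

end RootSystemData

theorem ell_eq_ell_prune_general
    {V : Type*} [NormedAddCommGroup V] [InnerProductSpace ℝ V]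
    (R : RootSystemData V)
    (A B : Finset V) (hA : A ⊆ R.simple) (hB : B ⊆ R.simple)
    (U B' : Finset V)
    (hU : U = (A ∪ B).filter fun x => ¬ ∃ a ∈ A, R.connTo (A ∪ B) x a)
    (hB' : B' = B \ U) :
    (∀ δ : V, R.IsABRoot A B δ ↔ R.IsABRoot A B' δ) ∧
    (∀ δ : V, R.IsSignificant A B δ ↔ R.IsSignificant A B' δ) ∧
    R.ell A B = R.ell A B' := by
  subst hU hB'
  have hdisj : ∀ δ, R.IsABRoot A B δ →
      Disjoint (R.support δ) (R.componentsAvoiding (A ∪ B) A) :=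
    fun δ hδ => hδ.disjoint_support_componentsAvoiding R hA hB
  have hsig := R.isSignificant_iff_isSignificant_sdiff hdisj hB
  exact ⟨R.isABRoot_iff_isABRoot_sdiff hdisj, hsig,
    congrArg card (filter_congr fun δ _ => hsig δ)⟩

/-- Let `U` be the union of the connected components of `A ∪ B` not meeting `A` and
`B′ = B \\ U`.  Then `(A,B)`-roots coincide with `(A,B′)`-roots, significant `(A,B)`-roots
coincide with significant `(A,B′)`-roots, and `ℓ(A,B) = ℓ(A,B′)`. -/
theorem ell_eq_ell_prune
    {V : Type*} [NormedAddCommGroup V] [InnerProductSpace ℝ V]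
    (R : RootSystemData V)
    (A B : Finset V) (hA : A ⊆ R.simple) (hB : B ⊆ R.simple) (hAB : Disjoint A B)
    (U B' : Finset V)
    (hU : U = (A ∪ B).filter fun x => ¬ ∃ a ∈ A, R.connTo (A ∪ B) x a)
    (hB' : B' = B \ U) :
    (∀ δ : V, R.IsABRoot A B δ ↔ R.IsABRoot A B' δ) ∧
    (∀ δ : V, R.IsSignificant A B δ ↔ R.IsSignificant A B' δ) ∧
    R.ell A B = R.ell A B' :=
  ell_eq_ell_prune_general R A B hA hB U B' hU hB'
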